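/- Let k ≥ 2 be an integer and let G be a strong digraph on at least two vertices having a collection of pairwise arc-disjoint directed cycles covering all its vertices. Then the k-th Cartesian power G^{□k} = G □ G □ ... □ G (k factors) can be decomposed into two arc-disjoint strong spanning subdigraphs. -/

import Mathlib

/-- A digraph (given by its arc relation) is strong (strongly connected). -/
def IsStrong {V : Type*} (A : V → V → Prop) : Prop :=
  ∀ x y : V, Relation.ReflTransGen A x y

/-- `A` has a pair of arc-disjoint strong spanning subdigraphs (a good decomposition). -/
def GoodDecomp {V : Type*} (A : V → V → Prop) : Prop :=
  ∃ A₁ A₂ : V → V → Prop,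
    (∀ x y, A₁ x y → A x y) ∧ (∀ x y, A₂ x y → A x y) ∧
    (∀ x y, ¬ (A₁ x y ∧ A₂ x y)) ∧ IsStrong A₁ ∧ IsStrong A₂

/-- Arc relation of the composition `T[H_1, ..., H_t]`. -/
def CompArc {t : ℕ} {Vt : Fin t → Type*} (T : Fin t → Fin t → Prop)
    (H : ∀ i, Vt i → Vt i → Prop) : (Σ i, Vt i) → (Σ i, Vt i) → Prop :=
  fun a b => T a.1 b.1 ∨ ∃ h : a.1 = b.1, H b.1 (h ▸ a.2) b.2


/-- The cyclic successor on `Fin n`. -/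
def finSucc {n : ℕ} (x : Fin n) : Fin n := ⟨(x.val + 1) % n, Nat.mod_lt _ x.pos⟩

def Semicomplete {V : Type*} (A : V → V → Prop) : Prop :=
  ∀ x y : V, x ≠ y → A x y ∨ A y x

/-- `A` is 2-arc-strong: it stays strong after deleting any set of at most one arc. -/
def TwoArcStrong {V : Type*} (A : V → V → Prop) : Prop :=
  ∀ X : Set (V × V), X.Subsingleton → IsStrong (fun x y => A x y ∧ (x, y) ∉ X)

/-- Digraph isomorphism. -/
def DIso {V W : Type*} (A : V → V → Prop) (B : W → W → Prop) : Prop :=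
  ∃ e : V ≃ W, ∀ x y, A x y ↔ B (e x) (e y)

/-- Arc relation of the directed cycle on `n` vertices. -/
def CycleArc (n : ℕ) : Fin n → Fin n → Prop := fun x y => y = finSucc x

/-- `T` (on `Fin t`) has a Hamiltonian cycle. -/
def HasHamCycle {t : ℕ} (T : Fin t → Fin t → Prop) : Prop :=
  ∃ e : Equiv.Perm (Fin t), ∀ i, T (e i) (e (finSucc i))

/-- Cartesian product of digraphs. -/
def CartProd {V W : Type*} (A : V → V → Prop) (B : W → W → Prop) :
    V × W → V × W → Prop :=
  fun p q => (A p.1 q.1 ∧ p.2 = q.2) ∨ (p.1 = q.1 ∧ B p.2 q.2)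

/-- Strong product of digraphs. -/
def StrongProd {V W : Type*} (A : V → V → Prop) (B : W → W → Prop) :
    V × W → V × W → Prop :=
  fun p q => (A p.1 q.1 ∧ p.2 = q.2) ∨ (p.1 = q.1 ∧ B p.2 q.2) ∨ (A p.1 q.1 ∧ B p.2 q.2)

/-- Lexicographic product of digraphs. -/
def LexProd {V W : Type*} (A : V → V → Prop) (B : W → W → Prop) :
    V × W → V × W → Prop :=
  fun p q => A p.1 q.1 ∨ (p.1 = q.1 ∧ B p.2 q.2)

/-- `k`-th Cartesian power of a digraph. -/
def CartPow {V : Type*} (A : V → V → Prop) (k : ℕ) :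
    (Fin k → V) → (Fin k → V) → Prop :=
  fun f g => ∃ i, A (f i) (g i) ∧ ∀ j, j ≠ i → f j = g j

/-- `A` has a collection of pairwise arc-disjoint directed cycles covering all vertices. -/
def HasCycleCover {V : Type*} (A : V → V → Prop) : Prop :=
  ∃ (k : ℕ) (m : Fin k → ℕ) (c : ∀ i : Fin k, Fin (m i) → V),
    (∀ i, 2 ≤ m i) ∧ (∀ i, Function.Injective (c i)) ∧
    (∀ i x, A (c i x) (c i (finSucc x))) ∧
    (∀ i j x y, c i x = c j y → c i (finSucc x) = c j (finSucc y) → i = j) ∧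
    (∀ v : V, ∃ i x, c i x = v)

/-- The digraph `C3[K2bar, K2bar, K2bar]`. -/
def Exc1 : Fin 3 × Fin 2 → Fin 3 × Fin 2 → Prop := fun p q => q.1 = finSucc p.1

/-- The digraph `C3[P2, K2bar, K2bar]`, the single arc of `P2` being `(0,0) → (0,1)`. -/
def Exc2 : Fin 3 × Fin 2 → Fin 3 × Fin 2 → Prop :=
  fun p q => q.1 = finSucc p.1 ∨ (p.1 = 0 ∧ q.1 = 0 ∧ p.2 = 0 ∧ q.2 = 1)

/-- Block index for `C3[K2bar, K2bar, K3bar]`. -/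
def blk : (Fin 2 ⊕ Fin 2 ⊕ Fin 3) → Fin 3 :=
  Sum.elim (fun _ => 0) (Sum.elim (fun _ => 1) (fun _ => 2))

/-- The digraph `C3[K2bar, K2bar, K3bar]`. -/
def Exc3 : (Fin 2 ⊕ Fin 2 ⊕ Fin 3) → (Fin 2 ⊕ Fin 2 ⊕ Fin 3) → Prop :=
  fun p q => blk q = finSucc (blk p)

/-- `S4`: the complete digraph on 4 vertices minus the directed 4-cycle `x → x+1`. -/
def S4Arc : Fin 4 → Fin 4 → Prop := fun x y => x ≠ y ∧ y ≠ finSucc x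

/-!
Write `G^{□(n+2)} ≅ (G □ G) □ G^{□n}`. A good decomposition `B₁, B₂` of a digraph `H` with two
vertices `a ≠ b` extends to `H □ K` for every strong `K`: keep `B₁` in every `H`-layer and add
the arcs of `K` only in the layer of `a`; symmetrically for `B₂` and `b`.

For `G □ G` it suffices to find a strong spanning subdigraph `S` that the swap
`(x, y) ↦ (y, x)` maps into the complement of `S`, since that complement then contains the strong
digraph `swap S`. Each arc `x → y` of `G` has horizontal copies `(x, z) → (y, z)` and vertical
copies `(z, x) → (z, y)`, and `S` takes exactly one copy for each `z`. On a cycle of the cover the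
choice is made by the reflection `s ↦ -s`, so that inside each torus `Cₘ □ Cₘ` the missing
horizontal arcs are bypassed by sweeps; an arc between different components of the cover is
coupled with the chosen cycle arc leaving its tail. `S` is strong because every `(u, v)` reaches
the diagonal vertex `(v, v)`, the diagonal is connected along the arcs of `G`, and `(v, v)`
reaches every `(x, v)`.
-/

open Relation Fin.NatCast Fin.CommRing

theorem finSucc_eq_add_one {n : ℕ} [NeZero n] (x : Fin n) : finSucc x = x + 1 := by
  ext
  simp [finSucc, Fin.val_add, Nat.add_mod]

theorem Fin.natCast_ne_of_lt {n : ℕ} [NeZero n] {j : ℕ} {a : Fin n} (h : j < a.val) :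
    (j : Fin n) ≠ a := by
  intro he
  have := congrArg Fin.val he
  rw [Fin.val_cast_of_lt (h.trans a.isLt)] at this
  omega

section Digraph

variable {V W : Type*}

theorem Relation.ReflTransGen.and_ne {A : V → V → Prop} {x y : V} (h : ReflTransGen A x y) :
    ReflTransGen (fun x y => A x y ∧ x ≠ y) x y := by
  induction h with
  | refl => exact .refl
  | @tail b c _ hbc ih =>
    by_cases hb : b = c
    exacts [hb ▸ ih, ih.tail ⟨hbc, hb⟩]

theorem IsStrong.of_diso {A : V → V → Prop} {B : W → W → Prop} (hAB : DIso A B)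
    (hA : IsStrong A) : IsStrong B := fun x y => by
  obtain ⟨e, he⟩ := hAB
  have := (hA (e.symm x) (e.symm y)).lift (p := B) e (fun a b h => (he a b).1 h)
  simpa [Function.onFun] using this

theorem GoodDecomp.of_diso {A : V → V → Prop} {B : W → W → Prop} (hAB : DIso A B)
    (hA : GoodDecomp A) : GoodDecomp B := by
  obtain ⟨e, he⟩ := hAB
  obtain ⟨A₁, A₂, h₁, h₂, hdisj, hs₁, hs₂⟩ := hA
  have strong {A' : V → V → Prop} (hs : IsStrong A') :
      IsStrong fun x y => A' (e.symm x) (e.symm y) :=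
    hs.of_diso ⟨e, fun x y => by simp⟩
  refine ⟨fun x y => A₁ (e.symm x) (e.symm y), fun x y => A₂ (e.symm x) (e.symm y),
    fun x y h => ?_, fun x y h => ?_, fun x y => hdisj _ _, strong hs₁, strong hs₂⟩
  · simpa using (he _ _).1 (h₁ _ _ h)
  · simpa using (he _ _).1 (h₂ _ _ h)

theorem CartProd.swap {A : V → V → Prop} {p q : V × V} (h : CartProd A A p q) :
    CartProd A A p.swap q.swap := by
  unfold CartProd at *
  tauto

theorem goodDecomp_cartProd_self_of_swap {A : V → V → Prop} {S : V × V → V × V → Prop}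
    (hS : ∀ p q, S p q → CartProd A A p q) (hSs : IsStrong S)
    (hswap : ∀ p q, S p q → ¬ S p.swap q.swap) : GoodDecomp (CartProd A A) := by
  refine ⟨S, fun p q => CartProd A A p q ∧ ¬ S p q, hS, fun _ _ h => h.1,
    fun _ _ h => h.2.2 h.1, hSs, fun p q => ?_⟩
  have := (hSs p.swap q.swap).lift (p := fun p q => CartProd A A p q ∧ ¬ S p q) Prod.swap
    fun a b h => ⟨(hS a b h).swap, hswap a b h⟩
  simpa [Function.onFun] using this

theorem GoodDecomp.cartProd {H : V → V → Prop} {K : W → W → Prop} (hH : GoodDecomp H)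
    {a b : V} (hab : a ≠ b) (hK : IsStrong K) : GoodDecomp (CartProd H K) := by
  obtain ⟨B₁, B₂, h₁, h₂, hdisj, hs₁, hs₂⟩ := hH
  -- loops of `K` are dropped so that the layers of `a` and `b` cannot share an arc
  let layer (B : V → V → Prop) (c : V) (p q : V × W) : Prop :=
    (B p.1 q.1 ∧ p.2 = q.2) ∨ (p.1 = c ∧ q.1 = c ∧ K p.2 q.2 ∧ p.2 ≠ q.2)
  have sub {B : V → V → Prop} (hB : ∀ x y, B x y → H x y) (c : V) (p q : V × W)
      (h : layer B c p q) : CartProd H K p q := by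
    rcases h with ⟨hb, h⟩ | ⟨hp, hq, hk, -⟩
    exacts [.inl ⟨hB _ _ hb, h⟩, .inr ⟨hp.trans hq.symm, hk⟩]
  have strong {B : V → V → Prop} (hB : IsStrong B) (c : V) : IsStrong (layer B c) := by
    intro p q
    have row (x y : V) (w : W) : ReflTransGen (layer B c) (x, w) (y, w) :=
      (hB x y).lift (fun x => (x, w)) fun _ _ h => .inl ⟨h, rfl⟩
    have col : ReflTransGen (layer B c) (c, p.2) (c, q.2) :=
      (hK p.2 q.2).and_ne.lift (fun w => (c, w)) fun _ _ h => .inr ⟨rfl, rfl, h⟩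
    exact ((row p.1 c p.2).trans col).trans (row c q.1 q.2)
  refine ⟨layer B₁ a, layer B₂ b, sub h₁ a, sub h₂ b, ?_, strong hs₁ a, strong hs₂ b⟩
  rintro p q ⟨⟨hb₁, he₁⟩ | ⟨hp₁, hq₁, -, hne₁⟩, ⟨hb₂, he₂⟩ | ⟨hp₂, hq₂, -, hne₂⟩⟩
  exacts [hdisj _ _ ⟨hb₁, hb₂⟩, hne₂ he₁, hne₁ he₂, hab (hp₁.symm.trans hp₂)]

theorem cartPow_cons_iff {A : V → V → Prop} {n : ℕ} {x y : V} {f g : Fin n → V} :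
    CartPow A (n + 1) (Fin.cons x f) (Fin.cons y g) ↔ CartProd A (CartPow A n) (x, f) (y, g) := by
  simp [CartPow, CartProd, Fin.exists_fin_succ, Fin.forall_fin_succ, funext_iff,
    (Fin.succ_ne_zero _).symm]
  tauto

theorem IsStrong.cartProd {A : V → V → Prop} {B : W → W → Prop} (hA : IsStrong A)
    (hB : IsStrong B) : IsStrong (CartProd A B) := fun p q =>
  ((hA p.1 q.1).lift (fun x => (x, p.2)) (fun _ _ h => .inl ⟨h, rfl⟩) _ _).trans
    ((hB p.2 q.2).lift (fun y => (q.1, y)) (fun _ _ h => .inr ⟨rfl, h⟩) _ _)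

theorem IsStrong.cartPow {A : V → V → Prop} (hA : IsStrong A) : ∀ n, IsStrong (CartPow A n)
  | 0 => fun f g => by rw [Subsingleton.elim f g]
  | n + 1 => (hA.cartProd (hA.cartPow n)).of_diso
      ⟨Fin.consEquiv fun _ => V, fun _ _ => cartPow_cons_iff.symm⟩

theorem diso_cartProd_self_cartPow (A : V → V → Prop) (n : ℕ) :
    DIso (CartProd (CartProd A A) (CartPow A n)) (CartPow A (n + 2)) := by
  refine ⟨(Equiv.prodAssoc V V _).trans ((Equiv.prodCongr (Equiv.refl V)
    (Fin.consEquiv fun _ => V)).trans (Fin.consEquiv fun _ => V)), ?_⟩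
  rintro ⟨⟨x, y⟩, f⟩ ⟨⟨x', y'⟩, f'⟩
  change _ ↔ CartPow A (n + 2) (Fin.cons x (Fin.cons y f)) (Fin.cons x' (Fin.cons y' f'))
  simp only [CartProd, cartPow_cons_iff, Prod.mk.injEq, Fin.cons_inj]
  tauto

end Digraph

structure CycleCover {V : Type*} (G : V → V → Prop) where
  n : ℕ
  len : Fin n → ℕ
  cyc : ∀ i, Fin (len i) → V
  two_le_len : ∀ i, 2 ≤ len i
  cyc_injective : ∀ i, Function.Injective (cyc i)
  adj_cyc : ∀ i s, G (cyc i s) (cyc i (finSucc s))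
  eq_of_cyc_arc : ∀ i j s t, cyc i s = cyc j t → cyc i (finSucc s) = cyc j (finSucc t) → i = j
  exists_cyc_eq : ∀ v, ∃ i s, cyc i s = v

namespace CycleCover

variable {V : Type*} {G : V → V → Prop} (D : CycleCover G)

instance (i : Fin D.n) : NeZero (D.len i) := ⟨by have := D.two_le_len i; omega⟩

theorem adj_cyc_add_one (i : Fin D.n) (s : Fin (D.len i)) : G (D.cyc i s) (D.cyc i (s + 1)) := by
  simpa only [finSucc_eq_add_one] using D.adj_cyc i s

theorem cyc_neg_eq_of_arc_eq {i j : Fin D.n} {s : Fin (D.len i)} {t : Fin (D.len j)}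
    (h₁ : D.cyc i s = D.cyc j t) (h₂ : D.cyc i (s + 1) = D.cyc j (t + 1)) :
    D.cyc i (-s) = D.cyc j (-t) := by
  obtain rfl := D.eq_of_cyc_arc i j s t h₁ (by simpa only [finSucc_eq_add_one] using h₂)
  rw [D.cyc_injective i h₁]

def CycArc (x y : V) : Prop := ∃ i s, D.cyc i s = x ∧ D.cyc i (s + 1) = y

def SameComp : V → V → Prop := ReflTransGen D.CycArc

def Bridge (x y : V) : Prop := G x y ∧ ¬ D.SameComp x y

noncomputable def idx (v : V) : Fin D.n := (D.exists_cyc_eq v).choose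

noncomputable def pos (v : V) : Fin (D.len (D.idx v)) := (D.exists_cyc_eq v).choose_spec.choose

theorem cyc_idx_pos (v : V) : D.cyc (D.idx v) (D.pos v) = v :=
  (D.exists_cyc_eq v).choose_spec.choose_spec

noncomputable def next (v : V) : V := D.cyc (D.idx v) (D.pos v + 1)

/-- `Ban x y z` says which copy through `z` of the arc `x → y` goes into `Arc₁`: the vertical
arc `(z, x) → (z, y)` if it holds, the horizontal arc `(x, z) → (y, z)` otherwise. A cycle arc
`cyc i s → cyc i (s + 1)` is banned exactly at its mirror image `cyc i (-s)`; bridges are coupled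
with the chosen successor arcs. -/
def Ban (x y z : V) : Prop :=
  (∃ i s, D.cyc i s = x ∧ D.cyc i (s + 1) = y ∧ D.cyc i (-s) = z) ∨
  (y = D.next x ∧ D.Bridge x z) ∨
  (D.Bridge x y ∧ z = D.next x)

def Arc₁ (p q : V × V) : Prop :=
  (q.2 = p.2 ∧ G p.1 q.1 ∧ ¬ D.Ban p.1 q.1 p.2) ∨
  (q.1 = p.1 ∧ G p.2 q.2 ∧ D.Ban p.2 q.2 p.1)

variable {D}

theorem CycArc.adj {x y : V} (h : D.CycArc x y) : G x y := by
  obtain ⟨i, s, rfl, rfl⟩ := h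
  exact D.adj_cyc_add_one i s

theorem SameComp.reflTransGen_adj {x y : V} (h : D.SameComp x y) : ReflTransGen G x y :=
  ReflTransGen.mono (fun _ _ => CycArc.adj) _ _ h

theorem sameComp_cyc_add (i : Fin D.n) (s : Fin (D.len i)) (k : ℕ) :
    D.SameComp (D.cyc i s) (D.cyc i (s + k)) := by
  induction k with
  | zero => rw [Nat.cast_zero, add_zero]; exact .refl
  | succ k ih => exact ih.tail ⟨i, s + k, rfl, by push_cast; rw [add_assoc]⟩

theorem sameComp_cyc (i : Fin D.n) (s t : Fin (D.len i)) : D.SameComp (D.cyc i s) (D.cyc i t) := by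
  simpa using D.sameComp_cyc_add i s (t - s).val

theorem sameComp_next (v : V) : D.SameComp v (D.next v) := by
  have := D.sameComp_cyc (D.idx v) (D.pos v) (D.pos v + 1)
  rwa [cyc_idx_pos] at this

theorem cycArc_next (v : V) : D.CycArc v (D.next v) := ⟨D.idx v, D.pos v, D.cyc_idx_pos v, rfl⟩

theorem adj_next (v : V) : G v (D.next v) := (D.cycArc_next v).adj

theorem SameComp.symm {x y : V} (h : D.SameComp x y) : D.SameComp y x := by
  induction h with
  | refl => exact .refl
  | tail _ hstep ih =>
    obtain ⟨i, s, rfl, rfl⟩ := hstep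
    exact (D.sameComp_cyc i (s + 1) s).trans ih

theorem ban_cyc (i : Fin D.n) (s : Fin (D.len i)) :
    D.Ban (D.cyc i s) (D.cyc i (s + 1)) (D.cyc i (-s)) :=
  .inl ⟨i, s, rfl, rfl, rfl⟩

theorem not_ban_cyc_of_sameComp {i : Fin D.n} {s : Fin (D.len i)} {z : V}
    (hz : D.SameComp (D.cyc i s) z) (hz' : z ≠ D.cyc i (-s)) :
    ¬ D.Ban (D.cyc i s) (D.cyc i (s + 1)) z := by
  rintro (⟨j, t, h₁, h₂, rfl⟩ | ⟨-, -, hb⟩ | ⟨⟨-, hb⟩, -⟩)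
  · exact hz' (D.cyc_neg_eq_of_arc_eq h₁ h₂)
  · exact hb hz
  · exact hb (D.sameComp_cyc i s (s + 1))

theorem ban_of_not_sameComp_left {x y z : V} (h : ¬ D.SameComp x z) (hb : D.Ban x y z) :
    y = D.next x ∧ D.Bridge x z := by
  rcases hb with ⟨i, s, rfl, -, rfl⟩ | hb | ⟨-, rfl⟩
  · exact absurd (D.sameComp_cyc i s (-s)) h
  · exact hb
  · exact absurd (D.sameComp_next x) h

theorem ban_of_not_sameComp_right {x y z : V} (h : ¬ D.SameComp y z) (hb : D.Ban x y z) :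
    (y = D.next x ∧ D.Bridge x z) ∨ (D.Bridge x y ∧ z = D.next x) := by
  rcases hb with ⟨i, s, -, rfl, rfl⟩ | hb
  · exact absurd (D.sameComp_cyc i (s + 1) (-s)) h
  · exact hb

theorem ban_bridge_iff {x y z : V} (hb : D.Bridge x y) : D.Ban x y z ↔ z = D.next x := by
  refine ⟨?_, fun h => .inr (.inr ⟨hb, h⟩)⟩
  rintro (⟨i, s, rfl, rfl, -⟩ | ⟨rfl, -⟩ | ⟨-, h⟩)
  · exact absurd (D.sameComp_cyc i s (s + 1)) hb.2
  · exact absurd (D.sameComp_next x) hb.2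
  · exact h

theorem arc₁_row {x y v : V} (h : G x y) (hb : ¬ D.Ban x y v) : D.Arc₁ (x, v) (y, v) :=
  .inl ⟨rfl, h, hb⟩

theorem arc₁_col {u v w : V} (h : G v w) (hb : D.Ban v w u) : D.Arc₁ (u, v) (u, w) :=
  .inr ⟨rfl, h, hb⟩

theorem Arc₁.cartProd {p q : V × V} (h : D.Arc₁ p q) : CartProd G G p q := by
  rcases h with ⟨h₂, h₁, -⟩ | ⟨h₁, h₂, -⟩
  exacts [.inl ⟨h₁, h₂.symm⟩, .inr ⟨h₁.symm, h₂⟩]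

theorem Arc₁.not_swap (hG : ∀ x, ¬ G x x) {p q : V × V} (h : D.Arc₁ p q) :
    ¬ D.Arc₁ p.swap q.swap := by
  obtain ⟨a, b⟩ := p
  obtain ⟨c, d⟩ := q
  rcases h with ⟨h₂, h₁, hb⟩ | ⟨h₁, h₂, hb⟩ <;>
    rintro (⟨h₂', h₁', hb'⟩ | ⟨h₁', h₂', hb'⟩)
  · exact hG a (by simp_all)
  · exact hb hb'
  · exact hb' hb
  · exact hG b (by simp_all)

section Cycle

variable (i : Fin D.n)

theorem reach_row_cyc_add (s : Fin (D.len i)) {v : V} (hv : D.SameComp (D.cyc i s) v) (k : ℕ)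
    (hk : ∀ j < k, v ≠ D.cyc i (-(s + j))) :
    ReflTransGen D.Arc₁ (D.cyc i s, v) (D.cyc i (s + k), v) := by
  induction k with
  | zero => rw [Nat.cast_zero, add_zero]
  | succ k ih =>
    refine (ih fun j hj => hk j (by omega)).tail ?_
    rw [Nat.cast_succ, ← add_assoc]
    exact D.arc₁_row (D.adj_cyc_add_one i _)
      (not_ban_cyc_of_sameComp ((D.sameComp_cyc i _ s).trans hv) (hk k (by omega)))

/-- One sweep: walk the row once around the cycle (at the column `cyc i (y + 1)` only the arc
into `cyc i (-y)` is banned, and that is the last one), then move the column by one. -/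
theorem reach_sweep_step (y : Fin (D.len i)) :
    ReflTransGen D.Arc₁ (D.cyc i (-y), D.cyc i (y + 1))
      (D.cyc i (-(y + 1)), D.cyc i (y + 1 + 1)) := by
  have hwalk := D.reach_row_cyc_add i (-y) (D.sameComp_cyc i _ (y + 1)) (-1 : Fin (D.len i)).val
    fun j hj he => Fin.natCast_ne_of_lt hj <| by
      have := D.cyc_injective i he
      linear_combination this
  rw [Fin.cast_val_eq_self, show -y + -1 = -(y + 1) by ring] at hwalk
  exact hwalk.tail (D.arc₁_col (D.adj_cyc_add_one i _) (D.ban_cyc i (y + 1)))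

theorem reach_sweep (y : Fin (D.len i)) (k : ℕ) :
    ReflTransGen D.Arc₁ (D.cyc i (-y), D.cyc i (y + 1))
      (D.cyc i (-(y + k)), D.cyc i (y + k + 1)) := by
  induction k with
  | zero => rw [Nat.cast_zero, add_zero]
  | succ k ih =>
    rw [Nat.cast_succ, ← add_assoc]
    exact ih.trans (D.reach_sweep_step i _)

/-- The horizontal arc `(cyc i s, cyc i (-s)) → (cyc i (s + 1), cyc i (-s))` is missing; it is
replaced by one vertical step followed by a full set of sweeps. -/
theorem reach_row_add_one_of_ban (s : Fin (D.len i)) :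
    ReflTransGen D.Arc₁ (D.cyc i s, D.cyc i (-s)) (D.cyc i (s + 1), D.cyc i (-s)) := by
  have hban := D.ban_cyc i (-s)
  have hsweep := D.reach_sweep i (-s) (-1 : Fin (D.len i)).val
  rw [neg_neg] at hban hsweep
  rw [Fin.cast_val_eq_self, show -(-s + -1) = s + 1 by ring, show -s + -1 + 1 = -s by ring]
    at hsweep
  exact .head (D.arc₁_col (D.adj_cyc_add_one i (-s)) hban) hsweep

end Cycle

theorem reach_row_of_cycArc {x y v : V} (hxy : D.CycArc x y) (hv : D.SameComp x v) :
    ReflTransGen D.Arc₁ (x, v) (y, v) := by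
  obtain ⟨i, s, rfl, rfl⟩ := hxy
  by_cases hs : v = D.cyc i (-s)
  · rw [hs]
    exact D.reach_row_add_one_of_ban i s
  · exact .single (D.arc₁_row (D.adj_cyc_add_one i s) (not_ban_cyc_of_sameComp hv hs))

theorem reach_diag_of_sameComp {x v : V} (h : D.SameComp x v) :
    ReflTransGen D.Arc₁ (x, v) (v, v) := by
  induction h using ReflTransGen.head_induction_on with
  | refl => exact .refl
  | head hstep htail ih => exact (reach_row_of_cycArc hstep (.head hstep htail)).trans ih

theorem reach_of_diag_of_sameComp {v x : V} (h : D.SameComp v x) :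
    ReflTransGen D.Arc₁ (v, v) (x, v) := by
  induction h with
  | refl => exact .refl
  | tail hchain hstep ih => exact ih.trans (reach_row_of_cycArc hstep (SameComp.symm hchain))

theorem reach_diag {u v : V} (h : ReflTransGen G u v) : ReflTransGen D.Arc₁ (u, v) (v, v) := by
  induction h using ReflTransGen.head_induction_on with
  | refl => exact .refl
  | @head u u' huu' _ ih =>
    by_cases hsame : D.SameComp u v
    · exact reach_diag_of_sameComp hsame
    by_cases hb : D.Ban u u' v
    · -- the banned arc leaves on the chosen cycle, so go straight across the bridge `u → v`
      have hbr := (ban_of_not_sameComp_left hsame hb).2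
      refine .single (D.arc₁_row hbr.1 fun hb' => hsame ?_)
      rw [(ban_bridge_iff hbr).1 hb']
      exact D.sameComp_next u
    · exact .head (D.arc₁_row huu' hb) ih

theorem diag_reach_of_cycArc {x y : V} (h : D.CycArc x y) :
    ReflTransGen D.Arc₁ (x, x) (y, y) := by
  obtain ⟨i, s, rfl, rfl⟩ := h
  exact ((reach_of_diag_of_sameComp (D.sameComp_cyc i s (-s))).tail
    (D.arc₁_col (D.adj_cyc_add_one i s) (D.ban_cyc i s))).trans
    (reach_diag_of_sameComp (D.sameComp_cyc i _ _))

theorem diag_reach_of_sameComp {x y : V} (h : D.SameComp x y) :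
    ReflTransGen D.Arc₁ (x, x) (y, y) := by
  induction h with
  | refl => exact .refl
  | tail _ hstep ih => exact ih.trans (diag_reach_of_cycArc hstep)

theorem diag_reach_of_bridge {x y : V} (hb : D.Bridge x y) :
    ReflTransGen D.Arc₁ (x, x) (y, y) :=
  ((reach_row_of_cycArc (D.cycArc_next x) .refl).tail
    (D.arc₁_col hb.1 ((ban_bridge_iff hb).2 rfl))).trans
    (reach_diag ((D.sameComp_next x).symm.reflTransGen_adj.tail hb.1))

theorem diag_reach {x y : V} (h : ReflTransGen G x y) : ReflTransGen D.Arc₁ (x, x) (y, y) := by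
  induction h with
  | refl => exact .refl
  | @tail y z _ hyz ih =>
    by_cases hsame : D.SameComp y z
    · exact ih.trans (diag_reach_of_sameComp hsame)
    · exact ih.trans (diag_reach_of_bridge ⟨hyz, hsame⟩)

theorem reach_of_diag (hG : ∀ x, ¬ G x x) {v x : V} (h : ReflTransGen G v x) :
    ReflTransGen D.Arc₁ (v, v) (x, v) := by
  induction h with
  | refl => exact .refl
  | @tail y z hvy hyz ih =>
    by_cases hsame : D.SameComp v z
    · exact reach_of_diag_of_sameComp hsame
    by_cases hb : D.Ban y z v
    · rcases ban_of_not_sameComp_right (fun h => hsame h.symm) hb with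
        ⟨rfl, hbr⟩ | ⟨hbr, rfl⟩
      · exact ((diag_reach hvy).trans (reach_row_of_cycArc (D.cycArc_next y) .refl)).tail
          (D.arc₁_col hbr.1 ((ban_bridge_iff hbr).2 rfl))
      · refine ((diag_reach hvy).tail (D.arc₁_row hyz fun hb' => hG y ?_)).tail
          (D.arc₁_col (D.adj_next y) (.inr (.inl ⟨rfl, hbr⟩)))
        have hy := D.adj_next y
        rwa [← (ban_bridge_iff hbr).1 hb'] at hy
    · exact ih.tail (D.arc₁_row hyz hb)

theorem isStrong_arc₁ (hG : ∀ x, ¬ G x x) (hGs : IsStrong G) : IsStrong D.Arc₁ :=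
  fun p q => ((reach_diag (hGs p.1 p.2)).trans (diag_reach (hGs p.2 q.2))).trans
    (reach_of_diag hG (hGs q.2 q.1))

end CycleCover

theorem HasCycleCover.goodDecomp_cartProd_self {V : Type*} {G : V → V → Prop}
    (hcover : HasCycleCover G) (hG : ∀ x, ¬ G x x) (hGs : IsStrong G) :
    GoodDecomp (CartProd G G) := by
  obtain ⟨n, len, cyc, h₁, h₂, h₃, h₄, h₅⟩ := hcover
  let D : CycleCover G := ⟨n, len, cyc, h₁, h₂, h₃, h₄, h₅⟩
  exact goodDecomp_cartProd_self_of_swap (fun _ _ h => h.cartProd) (D.isStrong_arc₁ hG hGs)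
    fun _ _ h => h.not_swap hG

theorem stmt_12_general {V : Type*} [Nontrivial V] (k : ℕ) (hk : 2 ≤ k)
    (G : V → V → Prop) (hG : Irreflexive G) (hGs : IsStrong G)
    (hcover : HasCycleCover G) :
    GoodDecomp (CartPow G k) := by
  obtain ⟨n, rfl⟩ : ∃ n, k = n + 2 := ⟨k - 2, by omega⟩
  obtain ⟨a, b, hab⟩ := exists_pair_ne V
  exact ((hcover.goodDecomp_cartProd_self hG hGs).cartProd (a := (a, a)) (b := (b, b))
    (by simpa using hab) (hGs.cartPow n)).of_diso (diso_cartProd_self_cartPow G n)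

theorem stmt_12 {V : Type*} [Fintype V] [Nontrivial V] (k : ℕ) (hk : 2 ≤ k)
    (G : V → V → Prop) (hG : Irreflexive G) (hGs : IsStrong G)
    (hcover : HasCycleCover G) :
    GoodDecomp (CartPow G k) :=
  stmt_12_general k hk G hG hGs hcover
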